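/- arXiv:1111.1410 — 3 statements merged into one kernel-verified Lean document; each statement's English description precedes it below -/
import Mathlib

section
/- For every plaintext bit p ∈ {0,1} and parameters w, w̃ ∈ {1,−1}, the ciphertext bit satisfies E(p,w,w̃) = p XOR (1 − w'), where w' = (w+1)/2 ∈ {0,1}. In other words, the encryption is exactly the exclusive-or of the plaintext bit with the complement of the bit w' derived from w. -/
/-- The threshold function: `f x = 1` if `x ≥ 0`, `0` otherwise. -/
noncomputable def f (x : ℝ) : ℕ := if 0 ≤ x then 1 else 0

/-- The bit `(w+1)/2` derived from a weight `w ∈ {1, -1}`, as a natural number. -/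
noncomputable def wbit (w : ℝ) : ℕ := ⌊(w + 1) / 2⌋.toNat

/-- Encryption of a bit `p` with weights `w, w̃ ∈ {1,-1}`:
`E p w w̃ = f (p·w + c·w̃ - θ)` if `w = 1`, `f (p·w - c·w̃ + θ)` otherwise,
where `c = -w/2` and `θ = ((w+1)/2) XOR ((w̃+1)/2)` (XOR of bits, cast to ℝ). -/
noncomputable def E (p : ℕ) (w wt : ℝ) : ℕ :=
  if w = 1 then
    f ((p : ℝ) * w + (-w / 2) * wt - ((wbit w ^^^ wbit wt : ℕ) : ℝ))
  else
    f ((p : ℝ) * w - (-w / 2) * wt + ((wbit w ^^^ wbit wt : ℕ) : ℝ))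

/-! Whatever `w̃` is, the threshold `θ` cancels the term `c·w̃` up to `±1/2`: the argument of `f`
is `p - 1/2` when `w = 1` and `1/2 - p` when `w = -1`, and thresholding these at `0` gives `p`
and its complement. -/

@[simp] lemma wbit_one : wbit 1 = 1 := by norm_num [wbit]

@[simp] lemma wbit_neg_one : wbit (-1) = 0 := by norm_num [wbit]

lemma f_bit_sub_half {p : ℕ} (hp : p = 0 ∨ p = 1) : f ((p : ℝ) - 1 / 2) = p := by
  rcases hp with rfl | rfl <;> norm_num [f]

lemma f_half_sub_bit {p : ℕ} (hp : p = 0 ∨ p = 1) : f (1 / 2 - (p : ℝ)) = p ^^^ 1 := by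
  rcases hp with rfl | rfl <;> norm_num [f]

lemma E_one {p : ℕ} (hp : p = 0 ∨ p = 1) {wt : ℝ} (hwt : wt = 1 ∨ wt = -1) :
    E p 1 wt = p := by
  have hθ : (p : ℝ) * 1 + (-1 / 2) * wt - ((wbit 1 ^^^ wbit wt : ℕ) : ℝ) = p - 1 / 2 := by
    rcases hwt with rfl | rfl <;> norm_num <;> ring
  rw [E, if_pos rfl, hθ, f_bit_sub_half hp]

lemma E_neg_one {p : ℕ} (hp : p = 0 ∨ p = 1) {wt : ℝ} (hwt : wt = 1 ∨ wt = -1) :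
    E p (-1) wt = p ^^^ 1 := by
  have hθ : (p : ℝ) * -1 - (-(-1) / 2) * wt + ((wbit (-1) ^^^ wbit wt : ℕ) : ℝ) = 1 / 2 - p := by
    rcases hwt with rfl | rfl <;> norm_num <;> ring
  rw [E, if_neg (by norm_num), hθ, f_half_sub_bit hp]

theorem stmt_5 (p : ℕ) (hp : p = 0 ∨ p = 1) (w wt : ℝ)
    (hw : w = 1 ∨ w = -1) (hwt : wt = 1 ∨ wt = -1) :
    E p w wt = p ^^^ (1 - wbit w) := by
  rcases hw with rfl | rfl
  · simp [E_one hp hwt]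
  · simp [E_neg_one hp hwt]
end

section
/- For every plaintext bit p ∈ {0,1}, every w ∈ {1,−1}, and every pair w̃₁, w̃₂ ∈ {1,−1}, one has E(p,w,w̃₁) = E(p,w,w̃₂); that is, the ciphertext bit produced by the encryption rule does not depend on the second weight sequence w̃ at all. -/
lemma E_one_of_sign (p : ℕ) {wt : ℝ} (hwt : wt = 1 ∨ wt = -1) :
    E p 1 wt = f (p - 1 / 2) := by
  rcases hwt with rfl | rfl <;> norm_num [E] <;> ring_nf

lemma E_neg_one_of_sign (p : ℕ) {wt : ℝ} (hwt : wt = 1 ∨ wt = -1) :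
    E p (-1) wt = f (1 / 2 - p) := by
  rcases hwt with rfl | rfl <;> norm_num [E] <;> ring_nf

theorem stmt_6_general (p : ℕ) (w wt₁ wt₂ : ℝ)
    (hw : w = 1 ∨ w = -1) (hwt₁ : wt₁ = 1 ∨ wt₁ = -1) (hwt₂ : wt₂ = 1 ∨ wt₂ = -1) :
    E p w wt₁ = E p w wt₂ := by
  rcases hw with rfl | rfl
  · rw [E_one_of_sign p hwt₁, E_one_of_sign p hwt₂]
  · rw [E_neg_one_of_sign p hwt₁, E_neg_one_of_sign p hwt₂]

theorem stmt_6 (p : ℕ) (hp : p = 0 ∨ p = 1) (w wt₁ wt₂ : ℝ)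
    (hw : w = 1 ∨ w = -1) (hwt₁ : wt₁ = 1 ∨ wt₁ = -1) (hwt₂ : wt₂ = 1 ∨ wt₂ = -1) :
    E p w wt₁ = E p w wt₂ :=
  stmt_6_general p w wt₁ wt₂ hw hwt₁ hwt₂
end

section
/- Let w, w̃ : Fin 8 → {1,−1} be fixed weight values for one byte position. Suppose two plaintext bytes with bit expansions p, q : Fin 8 → {0,1} are encrypted bitwise with the same weights, producing ciphertext bytes p'_n = Σ_{i=0}^{7} E(p(i),w(i),w̃(i))·2^i and q'_n = Σ_{i=0}^{7} E(q(i),w(i),w̃(i))·2^i, and let p_n = Σ_{i=0}^{7} p(i)·2^i and q_n = Σ_{i=0}^{7} q(i)·2^i. Then q_n = q'_n XOR (p_n XOR p'_n), where XOR is bitwise exclusive-or of natural numbers; i.e., the byte-level mask η_n = p_n XOR p'_n recovered from one known plaintext/ciphertext pair acts as an equivalent secret key for the byte. -/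
/-!
Each bit is encrypted as `E p w w̃ = p XOR E 0 w w̃`, i.e. by XOR with a key bit depending only
on the weights. Binary expansion turns bitwise XOR into XOR of bytes, so a byte is encrypted by
XOR with a fixed mask `η`; one known pair gives `η = pₙ XOR p'ₙ`, and XOR with `η` decrypts.
-/

lemma Nat.two_mul_add_xor_two_mul_add {a b : ℕ} (x y : ℕ) (ha : a ≤ 1) (hb : b ≤ 1) :
    (2 * x + a) ^^^ (2 * y + b) = 2 * (x ^^^ y) + (a ^^^ b) := by
  have := Nat.xor_bit (a == 1) x (b == 1) y
  interval_cases a <;> interval_cases b <;> simpa [Nat.bit, mul_comm] using this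

lemma Nat.binary_sum_xor {n : ℕ} (a b : Fin n → ℕ) (ha : ∀ i, a i ≤ 1) (hb : ∀ i, b i ≤ 1) :
    (∑ i, a i * 2 ^ (i : ℕ)) ^^^ (∑ i, b i * 2 ^ (i : ℕ))
      = ∑ i, (a i ^^^ b i) * 2 ^ (i : ℕ) := by
  induction n with
  | zero => simp
  | succ n ih =>
    have expand : ∀ c : Fin (n + 1) → ℕ,
        ∑ i, c i * 2 ^ (i : ℕ) = 2 * ∑ i : Fin n, c i.succ * 2 ^ (i : ℕ) + c 0 := by
      intro c
      rw [Fin.sum_univ_succ, Finset.mul_sum, add_comm]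
      simp only [Fin.val_succ, pow_succ, Fin.val_zero, pow_zero, mul_one]
      congr 1
      exact Finset.sum_congr rfl fun i _ => by ring
    rw [expand a, expand b, expand, Nat.two_mul_add_xor_two_mul_add _ _ (ha 0) (hb 0),
      ih _ _ (fun i => ha i.succ) (fun i => hb i.succ)]

lemma f_le_one (x : ℝ) : f x ≤ 1 := by
  unfold f; split_ifs <;> simp

lemma E_le_one (p : ℕ) (w wt : ℝ) : E p w wt ≤ 1 := by
  unfold E; split_ifs <;> exact f_le_one _

lemma E_eq_xor_E_zero {p : ℕ} {w wt : ℝ} (hp : p = 0 ∨ p = 1) (hw : w = 1 ∨ w = -1)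
    (hwt : wt = 1 ∨ wt = -1) : E p w wt = p ^^^ E 0 w wt := by
  rcases hw with rfl | rfl <;> rcases hwt with rfl | rfl <;> rcases hp with rfl | rfl <;>
    norm_num [E, f, wbit]

theorem stmt_10 (w wt : Fin 8 → ℝ)
    (hw : ∀ i, w i = 1 ∨ w i = -1) (hwt : ∀ i, wt i = 1 ∨ wt i = -1)
    (p q : Fin 8 → ℕ) (hp : ∀ i, p i = 0 ∨ p i = 1) (hq : ∀ i, q i = 0 ∨ q i = 1)
    (pn qn pn' qn' : ℕ)
    (hpn : pn = ∑ i : Fin 8, p i * 2 ^ (i : ℕ))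
    (hqn : qn = ∑ i : Fin 8, q i * 2 ^ (i : ℕ))
    (hpn' : pn' = ∑ i : Fin 8, E (p i) (w i) (wt i) * 2 ^ (i : ℕ))
    (hqn' : qn' = ∑ i : Fin 8, E (q i) (w i) (wt i) * 2 ^ (i : ℕ)) :
    qn = qn' ^^^ (pn ^^^ pn') := by
  have encrypt : ∀ {r : Fin 8 → ℕ}, (∀ i, r i = 0 ∨ r i = 1) →
      ∀ i, E (r i) (w i) (wt i) = r i ^^^ E 0 (w i) (wt i) :=
    fun hr i => E_eq_xor_E_zero (hr i) (hw i) (hwt i)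
  have mask : ∀ i, p i ^^^ E (p i) (w i) (wt i) = E 0 (w i) (wt i) := fun i => by
    rw [encrypt hp, Nat.xor_xor_cancel_left]
  have hp_le : ∀ i, p i ≤ 1 := fun i => by rcases hp i with h | h <;> omega
  rw [hpn, hqn, hpn', hqn', Nat.binary_sum_xor _ _ hp_le fun i => E_le_one _ _ _,
    Nat.binary_sum_xor _ _ (fun i => E_le_one _ _ _) fun i => by rw [mask]; exact E_le_one _ _ _]
  refine Finset.sum_congr rfl fun i _ => ?_
  rw [mask, encrypt hq, Nat.xor_xor_cancel_right]
end
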